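/- The infinite-horizon cost under the nominal control is uniformly bounded on Π: for every initial condition (S₀,E₀,I₀) ∈ Π, J_∞ = ∫₀^∞ (E(t)² + I(t)²) dt ≤ 2/η + 1/γ_nom < ∞, where (E,I) is the solution of the SEIR system with constant controls β ≡ β_nom, γ ≡ γ_nom. -/

import Mathlib

open Set MeasureTheory Filter

/-!
Along the SEIR flow the potentials `S + E` and `S + E + I` take values in `[0, 1]` and decrease
at the rates `η E` and `γ I` respectively, so `∫ E ≤ 1 / η` and `∫ I ≤ 1 / γ` over every
interval `[0, b]`. Since `E, I ∈ [0, 1]`, the cost density `E² + I²` is at most `E + I`, and the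
uniform bound on its partial integrals passes to the improper integral.
-/

lemma integrableOn_Ioi_and_integral_le_of_intervalIntegral_le {f : ℝ → ℝ} {a C : ℝ}
    (hf : ContinuousOn f (Ici a)) (hf₀ : ∀ t ≥ a, 0 ≤ f t)
    (hC : ∀ b ≥ a, ∫ t in a..b, f t ≤ C) :
    IntegrableOn f (Ioi a) ∧ ∫ t in Ioi a, f t ≤ C := by
  have hloc : ∀ b, IntegrableOn f (Ioc a b) := fun b =>
    ((hf.mono Icc_subset_Ici_self).integrableOn_Icc).mono_set Ioc_subset_Icc_self
  have hint : IntegrableOn f (Ioi a) := by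
    refine integrableOn_Ioi_of_intervalIntegral_norm_bounded C a hloc tendsto_id ?_
    filter_upwards [eventually_ge_atTop a] with b hb
    calc ∫ t in a..b, ‖f t‖ = ∫ t in a..b, f t :=
          intervalIntegral.integral_congr fun t ht =>
            Real.norm_of_nonneg (hf₀ t (uIcc_of_le hb ▸ ht).1)
      _ ≤ C := hC b hb
  refine ⟨hint, le_of_tendsto (intervalIntegral_tendsto_integral_Ioi a hint tendsto_id) ?_⟩
  filter_upwards [eventually_ge_atTop a] with b hb using hC b hb

lemma intervalIntegral_le_div_of_hasDerivAt_neg_mul {V g : ℝ → ℝ} {a b c M : ℝ}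
    (hc : 0 < c) (hab : a ≤ b) (hV : ∀ t ∈ Icc a b, HasDerivAt V (-(c * g t)) t)
    (hg : IntervalIntegrable g volume a b) (hVa : V a ≤ M) (hVb : 0 ≤ V b) :
    ∫ t in a..b, g t ≤ M / c := by
  have hftc : ∫ t in a..b, -(c * g t) = V b - V a :=
    intervalIntegral.integral_eq_sub_of_hasDerivAt (fun t ht => hV t (uIcc_of_le hab ▸ ht))
      (hg.const_mul c).neg
  rw [intervalIntegral.integral_neg, intervalIntegral.integral_const_mul] at hftc
  rw [le_div_iff₀' hc]
  linarith

lemma seir_intervalIntegral_exposed_le {η β : ℝ} {S E I : ℝ → ℝ} (hη : 0 < η)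
    (hS : ∀ t, 0 ≤ t → HasDerivAt S (-β * S t * I t) t)
    (hE : ∀ t, 0 ≤ t → HasDerivAt E (β * S t * I t - η * E t) t)
    (hmem : ∀ t, 0 ≤ t → S t ∈ Icc (0:ℝ) 1 ∧ E t ∈ Icc (0:ℝ) 1 ∧
      I t ∈ Icc (0:ℝ) 1 ∧ S t + E t + I t ≤ 1)
    {b : ℝ} (hb : 0 ≤ b) :
    ∫ t in 0..b, E t ≤ 1 / η := by
  have hcE : ContinuousOn E (Icc 0 b) := fun t ht => (hE t ht.1).continuousAt.continuousWithinAt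
  obtain ⟨⟨-, -⟩, -, ⟨hI₀, -⟩, hsum₀⟩ := hmem 0 le_rfl
  obtain ⟨⟨hSb, -⟩, ⟨hEb, -⟩, -⟩ := hmem b hb
  exact intervalIntegral_le_div_of_hasDerivAt_neg_mul (V := fun t => S t + E t) hη hb
    (fun t ht => ((hS t ht.1).add (hE t ht.1)).congr_deriv (by ring))
    (hcE.intervalIntegrable_of_Icc hb) (by linarith) (by positivity)

lemma seir_intervalIntegral_infectious_le {η β γ : ℝ} {S E I : ℝ → ℝ} (hγ : 0 < γ)
    (hS : ∀ t, 0 ≤ t → HasDerivAt S (-β * S t * I t) t)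
    (hE : ∀ t, 0 ≤ t → HasDerivAt E (β * S t * I t - η * E t) t)
    (hI : ∀ t, 0 ≤ t → HasDerivAt I (η * E t - γ * I t) t)
    (hmem : ∀ t, 0 ≤ t → S t ∈ Icc (0:ℝ) 1 ∧ E t ∈ Icc (0:ℝ) 1 ∧
      I t ∈ Icc (0:ℝ) 1 ∧ S t + E t + I t ≤ 1)
    {b : ℝ} (hb : 0 ≤ b) :
    ∫ t in 0..b, I t ≤ 1 / γ := by
  have hcI : ContinuousOn I (Icc 0 b) := fun t ht => (hI t ht.1).continuousAt.continuousWithinAt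
  obtain ⟨⟨hSb, -⟩, ⟨hEb, -⟩, ⟨hIb, -⟩, -⟩ := hmem b hb
  exact intervalIntegral_le_div_of_hasDerivAt_neg_mul (V := fun t => S t + E t + I t) hγ hb
    (fun t ht => (((hS t ht.1).add (hE t ht.1)).add (hI t ht.1)).congr_deriv (by ring))
    (hcI.intervalIntegrable_of_Icc hb) (hmem 0 le_rfl).2.2.2 (by positivity)

theorem seir_nominal_cost_bounded_general
    (η βnom γnom : ℝ)
    (hη : 0 < η) (hγnom : 0 < γnom)
    (S E I : ℝ → ℝ)
    (hS : ∀ t, 0 ≤ t → HasDerivAt S (-βnom * S t * I t) t)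
    (hE : ∀ t, 0 ≤ t → HasDerivAt E (βnom * S t * I t - η * E t) t)
    (hI : ∀ t, 0 ≤ t → HasDerivAt I (η * E t - γnom * I t) t)
    (hmem : ∀ t, 0 ≤ t → S t ∈ Icc (0:ℝ) 1 ∧ E t ∈ Icc (0:ℝ) 1 ∧
      I t ∈ Icc (0:ℝ) 1 ∧ S t + E t + I t ≤ 1) :
    IntegrableOn (fun t => (E t) ^ 2 + (I t) ^ 2) (Ioi 0) ∧
      (∫ t in Ioi (0:ℝ), ((E t) ^ 2 + (I t) ^ 2)) ≤ 2 / η + 1 / γnom := by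
  have hcE : ContinuousOn E (Ici 0) := fun t ht => (hE t ht).continuousAt.continuousWithinAt
  have hcI : ContinuousOn I (Ici 0) := fun t ht => (hI t ht).continuousAt.continuousWithinAt
  have hcost : ContinuousOn (fun t => E t ^ 2 + I t ^ 2) (Ici 0) := (hcE.pow 2).add (hcI.pow 2)
  refine integrableOn_Ioi_and_integral_le_of_intervalIntegral_le hcost
    (fun t _ => by positivity) fun b hb => ?_
  have hEi : IntervalIntegrable E volume 0 b :=
    (hcE.mono Icc_subset_Ici_self).intervalIntegrable_of_Icc hb
  have hIi : IntervalIntegrable I volume 0 b :=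
    (hcI.mono Icc_subset_Ici_self).intervalIntegrable_of_Icc hb
  have hsq_le : ∀ t ∈ Icc 0 b, E t ^ 2 + I t ^ 2 ≤ E t + I t := fun t ht =>
    have ⟨_, hEt, hIt, _⟩ := hmem t ht.1
    add_le_add (sq_le hEt.1 hEt.2) (sq_le hIt.1 hIt.2)
  calc ∫ t in 0..b, E t ^ 2 + I t ^ 2 ≤ ∫ t in 0..b, E t + I t :=
        intervalIntegral.integral_mono_on hb
          ((hcost.mono Icc_subset_Ici_self).intervalIntegrable_of_Icc hb) (hEi.add hIi) hsq_le
    _ = (∫ t in 0..b, E t) + ∫ t in 0..b, I t := intervalIntegral.integral_add hEi hIi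
    _ ≤ 1 / η + 1 / γnom := add_le_add (seir_intervalIntegral_exposed_le hη hS hE hmem hb)
        (seir_intervalIntegral_infectious_le hγnom hS hE hI hmem hb)
    _ ≤ 2 / η + 1 / γnom := by gcongr; norm_num

/-- The infinite-horizon nominal cost is bounded by 2/η + 1/γ_nom. -/
theorem seir_nominal_cost_bounded
    (η βnom γnom : ℝ)
    (hη : 0 < η) (hβnom : 0 < βnom) (hγnom : 0 < γnom)
    (S E I : ℝ → ℝ)
    (hS : ∀ t, 0 ≤ t → HasDerivAt S (-βnom * S t * I t) t)
    (hE : ∀ t, 0 ≤ t → HasDerivAt E (βnom * S t * I t - η * E t) t)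
    (hI : ∀ t, 0 ≤ t → HasDerivAt I (η * E t - γnom * I t) t)
    (hmem : ∀ t, 0 ≤ t → S t ∈ Icc (0:ℝ) 1 ∧ E t ∈ Icc (0:ℝ) 1 ∧
      I t ∈ Icc (0:ℝ) 1 ∧ S t + E t + I t ≤ 1) :
    IntegrableOn (fun t => (E t) ^ 2 + (I t) ^ 2) (Ioi 0) ∧
      (∫ t in Ioi (0:ℝ), ((E t) ^ 2 + (I t) ^ 2)) ≤ 2 / η + 1 / γnom :=
  seir_nominal_cost_bounded_general η βnom γnom hη hγnom S E I hS hE hI hmem
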